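/- The standard skew-normal density is log-concave: for f(x) = 2·φ(x)·Φ(αx), the second derivative of log f(x) with respect to x is negative for all x ∈ ℝ and all α ∈ ℝ. -/

import Mathlib

/-!
With `r = φ / Φ`, one has `(log f)' (x) = -x + α r(αx)` and `r' (u) = -r(u) (r(u) + u)`, so
`(log f)'' (x) = -1 - α² r(αx) (r(αx) + αx)`. The second term is nonpositive because
`φ(u) + u Φ(u) = ∫_{t ≤ u} (u - t) φ(t) dt ≥ 0`, using `∫_{t ≤ u} t φ(t) dt = -φ(u)`.
-/

open MeasureTheory Real Filter Set

noncomputable def phi (x : ℝ) : ℝ := (Real.sqrt (2 * Real.pi))⁻¹ * Real.exp (-x ^ 2 / 2)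

noncomputable def Phi (x : ℝ) : ℝ := ∫ t in Set.Iic x, phi t

lemma phi_eq_gaussianPDFReal : phi = ProbabilityTheory.gaussianPDFReal 0 1 := by
  ext x
  simp [phi, ProbabilityTheory.gaussianPDFReal]

lemma phi_pos (x : ℝ) : 0 < phi x := by
  unfold phi
  positivity

lemma integrable_phi : Integrable phi := by
  rw [phi_eq_gaussianPDFReal]
  exact ProbabilityTheory.integrable_gaussianPDFReal 0 1

lemma integrable_mul_phi : Integrable (fun t : ℝ => t * phi t) := by
  refine ((integrable_mul_exp_neg_mul_sq (b := 1 / 2) (by norm_num)).const_mul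
    (Real.sqrt (2 * π))⁻¹).congr (.of_forall fun t => ?_)
  simp only [phi]
  ring_nf

lemma hasDerivAt_phi (x : ℝ) : HasDerivAt phi (-x * phi x) x := by
  have hexp : HasDerivAt (fun y => -y ^ 2 / 2) (-x) x :=
    ((hasDerivAt_pow 2 x).neg.div_const 2).congr_deriv (by ring)
  exact (hexp.exp.const_mul (Real.sqrt (2 * π))⁻¹).congr_deriv (by rw [phi]; ring)

lemma integral_Iic_mul_phi (u : ℝ) : ∫ t in Iic u, t * phi t = -phi u := by
  have hderiv : ∀ t ∈ Iic u, HasDerivAt (fun t => -phi t) (t * phi t) t :=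
    fun t _ => (hasDerivAt_phi t).neg.congr_deriv (by ring)
  have hlim := tendsto_zero_of_hasDerivAt_of_integrableOn_Iic hderiv
    integrable_mul_phi.integrableOn integrable_phi.neg.integrableOn
  simpa using integral_Iic_of_hasDerivAt_of_tendsto' hderiv integrable_mul_phi.integrableOn hlim

lemma Phi_pos (x : ℝ) : 0 < Phi x := by
  have hsupp : Function.support phi = univ := Function.support_eq_univ fun t => (phi_pos t).ne'
  rw [Phi, setIntegral_pos_iff_support_of_nonneg_ae (.of_forall fun t => (phi_pos t).le)
    integrable_phi.integrableOn, hsupp, univ_inter, Real.volume_Iic]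
  exact ENNReal.zero_lt_top

lemma hasDerivAt_Phi (x : ℝ) : HasDerivAt Phi (phi x) x := by
  have hcont : Continuous phi := by unfold phi; fun_prop
  have hPhi : Phi = fun y => Phi 0 + ∫ t in (0 : ℝ)..y, phi t := by
    funext y
    rw [← intervalIntegral.integral_Iic_sub_Iic integrable_phi.integrableOn
      integrable_phi.integrableOn, Phi, Phi, add_sub_cancel]
  rw [hPhi]
  exact (intervalIntegral.integral_hasDerivAt_right (hcont.intervalIntegrable _ _)
    (hcont.stronglyMeasurableAtFilter _ _) hcont.continuousAt).const_add _

lemma mul_Phi_add_phi_eq_integral (u : ℝ) :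
    u * Phi u + phi u = ∫ t in Iic u, (u - t) * phi t := by
  simp_rw [sub_mul]
  rw [integral_sub (integrable_phi.const_mul u).integrableOn integrable_mul_phi.integrableOn,
    integral_const_mul, integral_Iic_mul_phi, Phi, sub_neg_eq_add]

lemma mul_Phi_add_phi_nonneg (u : ℝ) : 0 ≤ u * Phi u + phi u := by
  rw [mul_Phi_add_phi_eq_integral]
  exact setIntegral_nonneg measurableSet_Iic fun t ht =>
    mul_nonneg (sub_nonneg.2 ht) (phi_pos t).le

noncomputable def invMillsRatio (u : ℝ) : ℝ := phi u / Phi u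

lemma invMillsRatio_pos (u : ℝ) : 0 < invMillsRatio u :=
  div_pos (phi_pos u) (Phi_pos u)

lemma invMillsRatio_add_nonneg (u : ℝ) : 0 ≤ invMillsRatio u + u := by
  rw [invMillsRatio, div_add' _ _ _ (Phi_pos u).ne', add_comm]
  exact div_nonneg (mul_Phi_add_phi_nonneg u) (Phi_pos u).le

lemma hasDerivAt_invMillsRatio (u : ℝ) :
    HasDerivAt invMillsRatio (-invMillsRatio u * (invMillsRatio u + u)) u := by
  refine ((hasDerivAt_phi u).div (hasDerivAt_Phi u) (Phi_pos u).ne').congr_deriv ?_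
  have hPhi := (Phi_pos u).ne'
  unfold invMillsRatio
  field_simp
  ring

lemma hasDerivAt_log_Phi_mul (α y : ℝ) :
    HasDerivAt (fun y => Real.log (Phi (α * y))) (α * invMillsRatio (α * y)) y := by
  refine (((hasDerivAt_Phi (α * y)).comp y (hasDerivAt_const_mul α)).log
    (Phi_pos (α * y)).ne').congr_deriv ?_
  simp only [Function.comp_apply, invMillsRatio]
  ring

lemma hasDerivAt_log_skewNormal (α y : ℝ) :
    HasDerivAt (fun y => Real.log (2 * phi y * Phi (α * y)))
      (-y + α * invMillsRatio (α * y)) y := by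
  have hlog : (fun y => Real.log (2 * phi y * Phi (α * y))) =
      fun y => Real.log (2 * (Real.sqrt (2 * π))⁻¹) - y ^ 2 / 2 + Real.log (Phi (α * y)) := by
    funext y
    rw [Real.log_mul (by positivity [phi_pos y]) (Phi_pos _).ne', phi, ← mul_assoc,
      Real.log_mul (by positivity) (Real.exp_pos _).ne', Real.log_exp]
    ring
  rw [hlog]
  refine ((((hasDerivAt_pow 2 y).div_const 2).const_sub _).add
    (hasDerivAt_log_Phi_mul α y)).congr_deriv ?_
  ring

lemma deriv_deriv_log_skewNormal (α x : ℝ) :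
    deriv (deriv (fun y : ℝ => Real.log (2 * phi y * Phi (α * y)))) x =
      -1 - α ^ 2 * invMillsRatio (α * x) * (invMillsRatio (α * x) + α * x) := by
  have hderiv : deriv (fun y => Real.log (2 * phi y * Phi (α * y))) =
      fun y => -y + α * invMillsRatio (α * y) :=
    funext fun y => (hasDerivAt_log_skewNormal α y).deriv
  have hderiv2 : HasDerivAt (fun y => -y + α * invMillsRatio (α * y))
      (-1 - α ^ 2 * invMillsRatio (α * x) * (invMillsRatio (α * x) + α * x)) x :=
    ((hasDerivAt_neg x).add (((hasDerivAt_invMillsRatio (α * x)).comp x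
      (hasDerivAt_const_mul α)).const_mul α)).congr_deriv (by ring)
  rw [hderiv, hderiv2.deriv]

theorem skew_normal_log_concave (α x : ℝ) :
    deriv (deriv (fun y : ℝ => Real.log (2 * phi y * Phi (α * y)))) x < 0 := by
  rw [deriv_deriv_log_skewNormal]
  have h := mul_nonneg (invMillsRatio_pos (α * x)).le (invMillsRatio_add_nonneg (α * x))
  nlinarith [mul_nonneg (sq_nonneg α) h]
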